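/- Let T ∈ L(H) be trace class and let V ∈ L(H). The following are equivalent: (i) T(ker V) is a nonnegative subspace of H and for every B₀ ∈ L(H) with ran B₀ ⊆ ran V there exists X₀ ∈ L(H) with VX₀ = B₀ such that tr_J(X₀^# T^#T X₀) ≤ tr_J(X^# T^#T X) for every X ∈ L(H) with VX = B₀; (ii) there exists G ∈ L(H) with Gh ∈ sp(h) for every h ∈ H (a bounded global solution of the indefinite spline problem); (iii) T(ker V) is a nonnegative subspace of H and H = ker V + [T^#T(ker V)]^{[⊥]} (i.e., T^#T is ker V-complementable); (iv) sp(h₀) is nonempty for every h₀ ∈ H. -/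

import Mathlib

/-!
For `u ∈ h + ker V`, expanding `[T(u + t m), T(u + t m)]` as a real quadratic in `t` shows that
`u` minimises `x ↦ [Tx, Tx]` on `h + ker V` exactly when `T(ker V)` is nonnegative and
`[Tu, Tm] = 0` for all `m ∈ ker V`, i.e. `u ∈ [T^#T(ker V)]^[⊥]`. This gives (iii) ⟺ (iv)
pointwise. The subspace `W = [T^#T(ker V)]^[⊥]` is a Hilbert-orthogonal complement, hence
closed, so a Douglas-type factorisation (closed graph theorem) turns `H = ker V + W` into a
bounded `G` with `G h ∈ W` and `V G = V`, which is (ii).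

In a Hilbert basis `(bᵢ)`, `tr_J(X^# T^#T X) = ∑ᵢ [T X bᵢ, T X bᵢ]`. Composing a global
solution `G` with any `Y` such that `VY = B₀` therefore minimises every term at once (ii ⟹ i).
Conversely, if `X₀` minimises the `J`-trace subject to `V X₀ = V`, perturbing it by the
rank-one operators `⟨bᵢ, ·⟩ w` with `w ∈ ker V` changes only the `i`-th term, so each `X₀ bᵢ`,
and by density each `X₀ h`, satisfies the orthogonality condition (i ⟹ ii).
-/

open ContinuousLinearMap

noncomputable section

variable {H : Type*} [NormedAddCommGroup H] [InnerProductSpace ℂ H] [CompleteSpace H]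

/-- The Krein adjoint `S^# = J ∘ S* ∘ J` of `S ∈ L(H)` on a Krein space with signature
operator `J`. -/
def kadj (J S : H →L[ℂ] H) : H →L[ℂ] H :=
  J ∘L (ContinuousLinearMap.adjoint S) ∘L J

/-- `S` is a Hilbert–Schmidt operator (w.r.t. the Hilbert basis `b`; this is in fact
independent of the basis). -/
def IsHilbertSchmidt {ι : Type*} (b : HilbertBasis ι ℂ H) (S : H →L[ℂ] H) : Prop :=
  Summable fun i => ‖S (b i)‖ ^ 2

/-- `S` is trace class: it is the product of two Hilbert–Schmidt operators. -/
def IsTraceClass {ι : Type*} (b : HilbertBasis ι ℂ H) (S : H →L[ℂ] H) : Prop :=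
  ∃ S₁ S₂ : H →L[ℂ] H, IsHilbertSchmidt b S₁ ∧ IsHilbertSchmidt b S₂ ∧ S = S₁ ∘L S₂

/-- The `J`-trace `tr_J(S) = tr(J∘S)` of a (trace-class) operator `S`, computed in the
Hilbert basis `b`. -/
def trJ {ι : Type*} (J : H →L[ℂ] H) (b : HilbertBasis ι ℂ H) (S : H →L[ℂ] H) : ℝ :=
  ∑' i, (inner ℂ (J (S (b i))) (b i) : ℂ).re

/-- The operator `X^# T^#T X`. -/
def splineOp (J T X : H →L[ℂ] H) : H →L[ℂ] H :=
  kadj J X ∘L ((kadj J T ∘L T) ∘L X)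

/-- `sp(h)`: the set of solutions of the indefinite spline problem with data `h`, i.e.
those `u ∈ h + ker V` with `[Tu,Tu] ≤ [T(h+z),T(h+z)]` for every `z ∈ ker V`. -/
def spSet (J T V : H →L[ℂ] H) (h : H) : Set H :=
  {u | (∃ z : H, V z = 0 ∧ u = h + z) ∧
    ∀ z : H, V z = 0 →
      (inner ℂ (J (T u)) (T u) : ℂ).re ≤ (inner ℂ (J (T (h + z))) (T (h + z)) : ℂ).re}

namespace ContinuousLinearMap

variable {𝕜 E F G : Type*} [RCLike 𝕜]
  [NormedAddCommGroup E] [NormedSpace 𝕜 E] [CompleteSpace E]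
  [NormedAddCommGroup F] [NormedSpace 𝕜 F]
  [NormedAddCommGroup G] [NormedSpace 𝕜 G] [CompleteSpace G]

theorem exists_comp_eq_of_injective {V : E →L[𝕜] F} (hV : Function.Injective V)
    {B : G →L[𝕜] F} (hB : Set.range B ⊆ Set.range V) :
    ∃ X : G →L[𝕜] E, V ∘L X = B := by
  let e := LinearEquiv.ofInjective (V : E →ₗ[𝕜] F) hV
  let g : G →ₗ[𝕜] E :=
    e.symm ∘ₗ (B : G →ₗ[𝕜] F).codRestrict _ fun x => LinearMap.mem_range.mpr (hB ⟨x, rfl⟩)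
  have hVg (x : G) : V (g x) = B x := congrArg Subtype.val (e.apply_symm_apply ⟨B x, _⟩)
  have hgraph : (g.graph : Set (G × E)) = {p | V p.2 = B p.1} := by
    ext ⟨x, y⟩
    simp only [SetLike.mem_coe, LinearMap.mem_graph_iff, Set.mem_ofPred_eq, ← hVg]
    exact ⟨fun h => h ▸ rfl, fun h => hV h⟩
  have hclosed : IsClosed (g.graph : Set (G × E)) := by
    rw [hgraph]
    exact isClosed_eq (V.continuous.comp continuous_snd) (B.continuous.comp continuous_fst)
  exact ⟨ofIsClosedGraph hclosed, ext hVg⟩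

variable {E : Type*} [NormedAddCommGroup E] [InnerProductSpace 𝕜 E] [CompleteSpace E]

theorem exists_comp_eq_of_range_subset {V : E →L[𝕜] F} {B : G →L[𝕜] F}
    (hB : Set.range B ⊆ Set.range V) :
    ∃ X : G →L[𝕜] E, V ∘L X = B := by
  let N := V.kerᗮ
  have hinj : Function.Injective (V ∘L N.subtypeL) := by
    refine (injective_iff_map_eq_zero _).mpr fun y hy => ?_
    have hy' : (y : E) ∈ V.ker ⊓ N := ⟨LinearMap.mem_ker.mpr hy, y.2⟩
    rw [Submodule.inf_orthogonal_eq_bot] at hy'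
    exact Subtype.ext hy'
  have hrange : Set.range V ⊆ Set.range (V ∘L N.subtypeL) := by
    rintro _ ⟨y, rfl⟩
    obtain ⟨z, hz, w, hw, rfl⟩ := V.ker.exists_add_mem_mem_orthogonal y
    exact ⟨⟨w, hw⟩, by simp [show V z = 0 from hz]⟩
  obtain ⟨X, hX⟩ := exists_comp_eq_of_injective hinj (hB.trans hrange)
  exact ⟨N.subtypeL ∘L X, hX⟩

end ContinuousLinearMap

namespace HilbertBasis

variable {ι 𝕜 E : Type*} [RCLike 𝕜] [NormedAddCommGroup E] [InnerProductSpace 𝕜 E]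
  (b : HilbertBasis ι 𝕜 E)

theorem hasSum_norm_inner_sq (x : E) : HasSum (fun i => ‖inner 𝕜 (b i) x‖ ^ 2) (‖x‖ ^ 2) := by
  simpa [b.repr_apply_apply] using lp.hasSum_norm (p := 2) (by norm_num) (b.repr x)

theorem eq_zero_of_forall_inner_eq_zero {x : E} (h : ∀ i, inner 𝕜 (b i) x = 0) : x = 0 := by
  have hx : ‖x‖ ^ 2 = 0 := (b.hasSum_norm_inner_sq x).unique (by simp [h, hasSum_zero])
  simpa using hx

end HilbertBasis

namespace IsHilbertSchmidt

variable {ι : Type*} {b : HilbertBasis ι ℂ H} {S : H →L[ℂ] H}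

theorem adjoint (hS : IsHilbertSchmidt b S) :
    IsHilbertSchmidt b (ContinuousLinearMap.adjoint S) := by
  let F : ι × ι → ℝ := fun p => ‖inner ℂ (b p.2) (S (b p.1))‖ ^ 2
  have hF0 : 0 ≤ F := fun _ => by positivity
  have hF : Summable F := (summable_prod_of_nonneg hF0).mpr
    ⟨fun i => (b.hasSum_norm_inner_sq (S (b i))).summable,
      hS.congr fun i => (b.hasSum_norm_inner_sq (S (b i))).tsum_eq.symm⟩
  refine ((summable_prod_of_nonneg (f := fun p => F p.swap) fun p => hF0 p.swap).mp
    hF.prod_symm).2.congr fun j => ?_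
  calc ∑' i, F (i, j)
      = ∑' i, ‖inner ℂ (b i) (ContinuousLinearMap.adjoint S (b j))‖ ^ 2 :=
        tsum_congr fun i => by rw [ContinuousLinearMap.adjoint_inner_right, norm_inner_symm]
    _ = ‖ContinuousLinearMap.adjoint S (b j)‖ ^ 2 :=
        (b.hasSum_norm_inner_sq (ContinuousLinearMap.adjoint S (b j))).tsum_eq

omit [CompleteSpace H] in
theorem comp_left (A : H →L[ℂ] H) (hS : IsHilbertSchmidt b S) : IsHilbertSchmidt b (A ∘L S) :=
  .of_nonneg_of_le (fun _ => by positivity)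
    (fun i => by
      rw [← mul_pow]
      exact pow_le_pow_left₀ (norm_nonneg _) (A.le_opNorm _) 2)
    (hS.mul_left (‖A‖ ^ 2))

theorem comp_right (hS : IsHilbertSchmidt b S) (X : H →L[ℂ] H) :
    IsHilbertSchmidt b (S ∘L X) := by
  simpa [ContinuousLinearMap.adjoint_comp] using
    (hS.adjoint.comp_left (ContinuousLinearMap.adjoint X)).adjoint

omit [CompleteSpace H] in
theorem summable_re_inner (hS : IsHilbertSchmidt b S) (J : H →L[ℂ] H) :
    Summable fun i => (inner ℂ (J (S (b i))) (S (b i))).re := by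
  refine Summable.of_norm_bounded (hS.mul_left ‖J‖) fun i => ?_
  calc ‖(inner ℂ (J (S (b i))) (S (b i))).re‖ ≤ ‖J (S (b i))‖ * ‖S (b i)‖ :=
        (Real.norm_eq_abs _).trans_le ((Complex.abs_re_le_norm _).trans (norm_inner_le_norm _ _))
    _ ≤ ‖J‖ * ‖S (b i)‖ * ‖S (b i)‖ := by gcongr; exact J.le_opNorm _
    _ = ‖J‖ * ‖S (b i)‖ ^ 2 := by ring

end IsHilbertSchmidt

omit [CompleteSpace H] in
theorem IsTraceClass.isHilbertSchmidt {ι : Type*} {b : HilbertBasis ι ℂ H} {T : H →L[ℂ] H}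
    (hT : IsTraceClass b T) : IsHilbertSchmidt b T := by
  obtain ⟨S₁, S₂, -, hS₂, rfl⟩ := hT
  exact hS₂.comp_left S₁

section KreinForm

variable {E F : Type*} [NormedAddCommGroup E] [NormedSpace ℂ E]
  [NormedAddCommGroup F] [InnerProductSpace ℂ F] [CompleteSpace F] {J : F →L[ℂ] F}

theorem re_inner_apply_add_add (hJ : IsSelfAdjoint J) (x y : F) :
    (inner ℂ (J (x + y)) (x + y)).re =
      (inner ℂ (J x) x).re + 2 * (inner ℂ (J x) y).re + (inner ℂ (J y) y).re := by
  have hyx : inner ℂ (J y) x = starRingEnd ℂ (inner ℂ (J x) y) := by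
    rw [← ContinuousLinearMap.adjoint_inner_right, hJ.adjoint_eq, inner_conj_symm]
  simp only [map_add, inner_add_left, inner_add_right, hyx, Complex.add_re, Complex.conj_re]
  ring

variable {T : E →L[ℂ] F}

theorem re_inner_eq_zero_of_forall_le (hJ : IsSelfAdjoint J) {u m : E}
    (h : ∀ t : ℝ, (inner ℂ (J (T u)) (T u)).re ≤
      (inner ℂ (J (T (u + (t : ℂ) • m))) (T (u + (t : ℂ) • m))).re) :
    (inner ℂ (J (T u)) (T m)).re = 0 := by
  have hquad (t : ℝ) :
      0 ≤ (inner ℂ (J (T m)) (T m)).re * (t * t) + 2 * (inner ℂ (J (T u)) (T m)).re * t + 0 := by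
    have := h t
    rw [map_add T, re_inner_apply_add_add hJ, map_smul, map_smul, inner_smul_left,
      inner_smul_right, inner_smul_right, Complex.conj_ofReal, ← mul_assoc, ← Complex.ofReal_mul,
      Complex.re_ofReal_mul, Complex.re_ofReal_mul] at this
    linarith
  have := discrim_le_zero hquad
  rw [discrim] at this
  nlinarith

theorem inner_eq_zero_of_forall_le (hJ : IsSelfAdjoint J) {K : Submodule ℂ E} {u : E}
    (h : ∀ w ∈ K, (inner ℂ (J (T u)) (T u)).re ≤ (inner ℂ (J (T (u + w))) (T (u + w))).re)
    {m : E} (hm : m ∈ K) : inner ℂ (J (T u)) (T m) = 0 := by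
  have hre : ∀ m ∈ K, (inner ℂ (J (T u)) (T m)).re = 0 := fun m hm =>
    re_inner_eq_zero_of_forall_le hJ fun t => h _ (K.smul_mem _ hm)
  refine Complex.ext (hre m hm) ?_
  have := hre (Complex.I • m) (K.smul_mem _ hm)
  rw [map_smul, inner_smul_right, Complex.mul_re] at this
  simpa using this

theorem re_inner_nonneg_of_forall_le (hJ : IsSelfAdjoint J) {K : Submodule ℂ E} {u : E}
    (h : ∀ w ∈ K, (inner ℂ (J (T u)) (T u)).re ≤ (inner ℂ (J (T (u + w))) (T (u + w))).re)
    {m : E} (hm : m ∈ K) : 0 ≤ (inner ℂ (J (T m)) (T m)).re := by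
  have := h m hm
  rw [map_add, re_inner_apply_add_add hJ, inner_eq_zero_of_forall_le hJ h hm] at this
  simpa using this

end KreinForm

section Spline

variable {ι : Type*} {b : HilbertBasis ι ℂ H} {J T V : H →L[ℂ] H}

theorem inner_kadj_comp_self_apply (hJ : IsSelfAdjoint J) (hJ2 : J ∘L J = 1) (u m : H) :
    inner ℂ (J u) ((kadj J T ∘L T) m) = inner ℂ (J (T u)) (T m) := by
  have hJJ (x : H) : J (J x) = x := congrArg (· x) hJ2
  rw [← ContinuousLinearMap.adjoint_inner_right, hJ.adjoint_eq]
  simp only [kadj, ContinuousLinearMap.comp_apply, hJJ, ContinuousLinearMap.adjoint_inner_right]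
  exact (hJ.isSymmetric _ _).symm

theorem inner_splineOp_apply (hJ2 : J ∘L J = 1) (X : H →L[ℂ] H) (x : H) :
    inner ℂ (J (splineOp J T X x)) x = inner ℂ (J (T (X x))) (T (X x)) := by
  have hJJ (x : H) : J (J x) = x := congrArg (· x) hJ2
  simp only [splineOp, kadj, ContinuousLinearMap.comp_apply, hJJ,
    ContinuousLinearMap.adjoint_inner_left]

theorem mem_spSet_iff (hJ : IsSelfAdjoint J) {h u : H} :
    u ∈ spSet J T V h ↔ V u = V h ∧ (∀ z, V z = 0 → 0 ≤ (inner ℂ (J (T z)) (T z)).re) ∧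
      ∀ m, V m = 0 → inner ℂ (J (T u)) (T m) = 0 := by
  constructor
  · rintro ⟨⟨z₀, hz₀, rfl⟩, hmin⟩
    have hmin' : ∀ w ∈ V.ker, (inner ℂ (J (T (h + z₀))) (T (h + z₀))).re ≤
        (inner ℂ (J (T (h + z₀ + w))) (T (h + z₀ + w))).re := fun w hw => by
      rw [add_assoc]
      exact hmin _ (by rw [map_add, hz₀, zero_add]; exact hw)
    exact ⟨by simp [hz₀], fun z hz => re_inner_nonneg_of_forall_le hJ hmin' hz,
      fun m hm => inner_eq_zero_of_forall_le hJ hmin' hm⟩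
  · rintro ⟨hVu, hnonneg, horth⟩
    refine ⟨⟨u - h, by simp [hVu], by abel⟩, fun z hz => ?_⟩
    have hker : V (h + z - u) = 0 := by simp [hVu, hz]
    rw [show h + z = u + (h + z - u) by abel, map_add T, re_inner_apply_add_add hJ,
      horth _ hker]
    simpa using hnonneg _ hker

theorem exists_forall_mem_spSet (hJ : IsSelfAdjoint J)
    (hnonneg : ∀ z, V z = 0 → 0 ≤ (inner ℂ (J (T z)) (T z)).re)
    (hdec : ∀ x, ∃ z w, V z = 0 ∧ (∀ m, V m = 0 → inner ℂ (J (T w)) (T m) = 0) ∧ x = z + w) :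
    ∃ G : H →L[ℂ] H, ∀ h, G h ∈ spSet J T V h := by
  let A : H →L[ℂ] H := ContinuousLinearMap.adjoint T ∘L J ∘L T
  let W := (V.ker.map (A : H →ₗ[ℂ] H))ᗮ
  have hW {w : H} : w ∈ W ↔ ∀ m, V m = 0 → inner ℂ (J (T w)) (T m) = 0 := by
    have hA (m : H) : inner ℂ w (A m) = inner ℂ (J (T w)) (T m) := by
      simp only [A, ContinuousLinearMap.comp_apply, ContinuousLinearMap.adjoint_inner_right]
      exact (hJ.isSymmetric _ _).symm
    simp only [W, Submodule.mem_orthogonal', Submodule.mem_map, forall_exists_index, and_imp,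
      forall_apply_eq_imp_iff₂, ContinuousLinearMap.coe_coe, hA, LinearMap.mem_ker]
  have hrange : Set.range V ⊆ Set.range (V ∘L W.subtypeL) := by
    rintro _ ⟨x, rfl⟩
    obtain ⟨z, w, hz, hw, rfl⟩ := hdec x
    exact ⟨⟨w, hW.mpr hw⟩, by simp [hz]⟩
  obtain ⟨X, hX⟩ := ContinuousLinearMap.exists_comp_eq_of_range_subset hrange
  exact ⟨W.subtypeL ∘L X, fun h => (mem_spSet_iff hJ).mpr
    ⟨congrArg (· h) hX, hnonneg, hW.mp (X h).2⟩⟩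

theorem trJ_splineOp (hJ2 : J ∘L J = 1) (X : H →L[ℂ] H) :
    trJ J b (splineOp J T X) = ∑' i, (inner ℂ (J (T (X (b i)))) (T (X (b i)))).re :=
  tsum_congr fun i => congrArg Complex.re (inner_splineOp_apply hJ2 X (b i))

theorem trJ_splineOp_comp_le (hJ2 : J ∘L J = 1) (hT : IsHilbertSchmidt b T)
    {G X Y : H →L[ℂ] H} (hG : ∀ h, G h ∈ spSet J T V h) (hXY : V ∘L X = V ∘L Y) :
    trJ J b (splineOp J T (G ∘L Y)) ≤ trJ J b (splineOp J T X) := by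
  rw [trJ_splineOp hJ2, trJ_splineOp hJ2]
  refine Summable.tsum_le_tsum (fun i => ?_) ((hT.comp_right (G ∘L Y)).summable_re_inner J)
    ((hT.comp_right X).summable_re_inner J)
  have hker : V (X (b i) - Y (b i)) = 0 := by
    rw [map_sub, sub_eq_zero]
    exact congrArg (· (b i)) hXY
  simpa using (hG (Y (b i))).2 _ hker

theorem re_inner_le_of_trJ_le_add_smulRight (hJ2 : J ∘L J = 1) (hT : IsHilbertSchmidt b T)
    {X : H →L[ℂ] H} {i : ι} {w : H}
    (h : trJ J b (splineOp J T X) ≤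
      trJ J b (splineOp J T (X + (innerSL ℂ (b i)).smulRight w))) :
    (inner ℂ (J (T (X (b i)))) (T (X (b i)))).re ≤
      (inner ℂ (J (T (X (b i) + w))) (T (X (b i) + w))).re := by
  classical
  set R := (innerSL ℂ (b i)).smulRight w
  have hR (j : ι) : R (b j) = if j = i then w else 0 := by
    simp [R, orthonormal_iff_ite.mp b.orthonormal i j, eq_comm]
  rw [trJ_splineOp hJ2, trJ_splineOp hJ2] at h
  have hdiff := Summable.tsum_sub ((hT.comp_right (X + R)).summable_re_inner J)
    ((hT.comp_right X).summable_re_inner J)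
  rw [tsum_eq_single i fun j hj => by simp [hR, hj]] at hdiff
  have hXR : (X + R) (b i) = X (b i) + w := by simp [hR]
  simp only [ContinuousLinearMap.comp_apply, hXR] at hdiff
  linarith

theorem inner_eq_zero_of_forall_trJ_le (hJ : IsSelfAdjoint J) (hJ2 : J ∘L J = 1)
    (hT : IsHilbertSchmidt b T) {X₀ : H →L[ℂ] H} (hV : V ∘L X₀ = V)
    (hmin : ∀ X, V ∘L X = V → trJ J b (splineOp J T X₀) ≤ trJ J b (splineOp J T X))
    (h : H) {m : H} (hm : V m = 0) : inner ℂ (J (T (X₀ h))) (T m) = 0 := by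
  have hbasis (i : ι) : inner ℂ (J (T (X₀ (b i)))) (T m) = 0 := by
    refine inner_eq_zero_of_forall_le hJ (K := V.ker) (fun w hw => ?_) hm
    refine re_inner_le_of_trJ_le_add_smulRight hJ2 hT (hmin _ ?_)
    ext x
    simp [congrArg (· x) hV, show V w = 0 from hw]
  have hy := b.eq_zero_of_forall_inner_eq_zero
    (x := ContinuousLinearMap.adjoint (J ∘L T ∘L X₀) (T m)) fun i => by
      rw [ContinuousLinearMap.adjoint_inner_right]
      exact hbasis i
  calc inner ℂ (J (T (X₀ h))) (T m)
      = inner ℂ h (ContinuousLinearMap.adjoint (J ∘L T ∘L X₀) (T m)) :=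
        (ContinuousLinearMap.adjoint_inner_right (J ∘L T ∘L X₀) h (T m)).symm
    _ = 0 := by rw [hy, inner_zero_right]

end Spline

theorem stmt12_general {ι : Type*}
    (J : H →L[ℂ] H) (hJsa : IsSelfAdjoint J) (hJ2 : J ∘L J = 1)
    (b : HilbertBasis ι ℂ H)
    (T V : H →L[ℂ] H)
    (hTtc : IsTraceClass b T) :
    List.TFAE
      [ -- (i)
        (∀ z : H, V z = 0 → 0 ≤ (inner ℂ (J (T z)) (T z) : ℂ).re) ∧
          ∀ B₀ : H →L[ℂ] H, (∀ x : H, ∃ y : H, V y = B₀ x) →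
            ∃ X₀ : H →L[ℂ] H, V ∘L X₀ = B₀ ∧
              ∀ X : H →L[ℂ] H, V ∘L X = B₀ →
                trJ J b (splineOp J T X₀) ≤ trJ J b (splineOp J T X),
        -- (ii) a bounded global solution of the spline problem exists
        ∃ G : H →L[ℂ] H, ∀ h : H, G h ∈ spSet J T V h,
        -- (iii) `T(ker V)` is nonnegative and `H = ker V + [T^#T(ker V)]^{[⊥]}`
        (∀ z : H, V z = 0 → 0 ≤ (inner ℂ (J (T z)) (T z) : ℂ).re) ∧
          ∀ x : H, ∃ z w : H, V z = 0 ∧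
            (∀ m : H, V m = 0 → (inner ℂ (J w) ((kadj J T ∘L T) m) : ℂ) = 0) ∧
            x = z + w,
        -- (iv)
        ∀ h₀ : H, (spSet J T V h₀).Nonempty ] := by
  have hT := hTtc.isHilbertSchmidt
  tfae_have 2 → 4 := fun ⟨G, hG⟩ h₀ => ⟨G h₀, hG h₀⟩
  tfae_have 4 → 3 := by
    intro hsp
    obtain ⟨u₀, hu₀⟩ := hsp 0
    refine ⟨((mem_spSet_iff hJsa).mp hu₀).2.1, fun x => ?_⟩
    obtain ⟨u, hu⟩ := hsp x
    obtain ⟨hVu, -, horth⟩ := (mem_spSet_iff hJsa).mp hu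
    refine ⟨x - u, u, by simp [hVu], fun m hm => ?_, by abel⟩
    rw [inner_kadj_comp_self_apply hJsa hJ2]
    exact horth m hm
  tfae_have 3 → 2 := by
    rintro ⟨hnonneg, hdec⟩
    refine exists_forall_mem_spSet hJsa hnonneg fun x => ?_
    obtain ⟨z, w, hz, hw, rfl⟩ := hdec x
    exact ⟨z, w, hz, fun m hm => inner_kadj_comp_self_apply (T := T) hJsa hJ2 w m ▸ hw m hm, rfl⟩
  tfae_have 2 → 1 := by
    rintro ⟨G, hG⟩
    refine ⟨((mem_spSet_iff hJsa).mp (hG 0)).2.1, fun B₀ hB₀ => ?_⟩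
    obtain ⟨Y, hY⟩ := ContinuousLinearMap.exists_comp_eq_of_range_subset (V := V)
      (by rintro _ ⟨x, rfl⟩; exact hB₀ x)
    have hVG : V ∘L G = V := ContinuousLinearMap.ext fun h => ((mem_spSet_iff hJsa).mp (hG h)).1
    refine ⟨G ∘L Y, by rw [← ContinuousLinearMap.comp_assoc, hVG, hY], fun X hX => ?_⟩
    exact trJ_splineOp_comp_le hJ2 hT hG (hX.trans hY.symm)
  tfae_have 1 → 2 := by
    rintro ⟨hnonneg, hsolv⟩
    obtain ⟨X₀, hVX₀, hmin⟩ := hsolv V fun x => ⟨x, rfl⟩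
    exact ⟨X₀, fun h => (mem_spSet_iff hJsa).mpr ⟨congrArg (· h) hVX₀, hnonneg,
      fun m hm => inner_eq_zero_of_forall_trJ_le hJsa hJ2 hT hVX₀ hmin h hm⟩⟩
  tfae_finish

/-- for trace-class `T`, the equivalence of (i) solvability of the operator
spline problem for every admissible `B₀` together with nonnegativity of `T(ker V)`,
(ii) existence of a bounded global solution of the indefinite spline problem,
(iii) nonnegativity of `T(ker V)` together with `ker V`-complementability of `T^#T`, and
(iv) nonemptiness of `sp(h₀)` for every `h₀`. -/
theorem stmt12 {ι : Type*}
    [TopologicalSpace.SeparableSpace H]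
    (J : H →L[ℂ] H) (hJsa : IsSelfAdjoint J) (hJ2 : J ∘L J = 1)
    (b : HilbertBasis ι ℂ H)
    (T V : H →L[ℂ] H)
    (hTtc : IsTraceClass b T) :
    List.TFAE
      [ -- (i)
        (∀ z : H, V z = 0 → 0 ≤ (inner ℂ (J (T z)) (T z) : ℂ).re) ∧
          ∀ B₀ : H →L[ℂ] H, (∀ x : H, ∃ y : H, V y = B₀ x) →
            ∃ X₀ : H →L[ℂ] H, V ∘L X₀ = B₀ ∧
              ∀ X : H →L[ℂ] H, V ∘L X = B₀ →
                trJ J b (splineOp J T X₀) ≤ trJ J b (splineOp J T X),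
        -- (ii) a bounded global solution of the spline problem exists
        ∃ G : H →L[ℂ] H, ∀ h : H, G h ∈ spSet J T V h,
        -- (iii) `T(ker V)` is nonnegative and `H = ker V + [T^#T(ker V)]^{[⊥]}`
        (∀ z : H, V z = 0 → 0 ≤ (inner ℂ (J (T z)) (T z) : ℂ).re) ∧
          ∀ x : H, ∃ z w : H, V z = 0 ∧
            (∀ m : H, V m = 0 → (inner ℂ (J w) ((kadj J T ∘L T) m) : ℂ) = 0) ∧
            x = z + w,
        -- (iv)
        ∀ h₀ : H, (spSet J T V h₀).Nonempty ] :=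
  stmt12_general J hJsa hJ2 b T V hTtc
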